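/- arXiv:2005.10623 — 6 statements merged into one kernel-verified Lean document; each statement's English description precedes it below -/
import Mathlib

section
/- Let 𝐌 : I^p → I^p be a mean-type mapping and φ a p-limit-like function. Then the function 𝓜_φ : I^p → ℝ defined by 𝓜_φ(v) = φ(O*_𝐌(v)) is a mean on I and is 𝐌-invariant, i.e. 𝓜_φ ∘ 𝐌 = 𝓜_φ. -/
open Filter Set Topology

/-- `M` is a mean on the interval `I` (for `p`-tuples): its value is between the
minimum and the maximum of the arguments, for every tuple with entries in `I`. -/
def IsMean (I : Set ℝ) (p : ℕ) (M : (Fin p → ℝ) → ℝ) : Prop :=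
  ∀ v : Fin p → ℝ, (∀ i, v i ∈ I) →
    sInf (Set.range v) ≤ M v ∧ M v ≤ sSup (Set.range v)

/-- A mean-type mapping: every coordinate function is a mean on `I`, and it maps
`I^p` into `I^p`. -/
def IsMeanType (I : Set ℝ) (p : ℕ) (T : (Fin p → ℝ) → Fin p → ℝ) : Prop :=
  (∀ i, IsMean I p fun v => T v i) ∧
    ∀ v : Fin p → ℝ, (∀ i, v i ∈ I) → ∀ i, T v i ∈ I

/-- The unfolded orbit `O*_𝐌(v)`: the `(n*p + i)`-th term (`0 ≤ i < p`) is the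
`i`-th coordinate of `𝐌ⁿ(v)`. -/
def orbitSeq (p : ℕ) (hp : 0 < p) (T : (Fin p → ℝ) → Fin p → ℝ)
    (v : Fin p → ℝ) : ℕ → ℝ :=
  fun k => (T^[k / p] v) ⟨k % p, Nat.mod_lt k hp⟩

/-- A `p`-limit-like function: on every bounded sequence with values in `I` it is
invariant under shifting by `p` terms and lies between the `liminf` and the `limsup`. -/
def IsLimitLike (I : Set ℝ) (p : ℕ) (φ : (ℕ → ℝ) → ℝ) : Prop :=
  ∀ a : ℕ → ℝ, (∀ n, a n ∈ I) → BddBelow (Set.range a) → BddAbove (Set.range a) →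
    φ a = φ (fun n => a (n + p)) ∧
    Filter.liminf a Filter.atTop ≤ φ a ∧
    φ a ≤ Filter.limsup a Filter.atTop

lemma iter_bounds {I : Set ℝ} {p : ℕ} (hp : 2 ≤ p)
    (T : (Fin p → ℝ) → Fin p → ℝ) (hT : IsMeanType I p T)
    (v : Fin p → ℝ) (hv : ∀ i, v i ∈ I) (n : ℕ) :
    ∀ i, T^[n] v i ∈ I ∧ sInf (Set.range v) ≤ T^[n] v i ∧ T^[n] v i ≤ sSup (Set.range v) := by
  have hpos : 0 < p := by omega
  haveI : Nonempty (Fin p) := ⟨⟨0, hpos⟩⟩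
  induction n with
  | zero =>
    intro i
    refine ⟨hv i, csInf_le (Set.finite_range v).bddBelow ⟨i, rfl⟩,
      le_csSup (Set.finite_range v).bddAbove ⟨i, rfl⟩⟩
  | succ n ih =>
    intro i
    set w := T^[n] v with hw
    have hwI : ∀ j, w j ∈ I := fun j => (ih j).1
    have h1 : T^[n+1] v = T w := by
      rw [Function.iterate_succ_apply']
    have hmean := hT.1 i w hwI
    have hmem := hT.2 w hwI i
    have hlo : sInf (Set.range v) ≤ sInf (Set.range w) :=
      le_csInf (Set.range_nonempty w) (by rintro x ⟨j, rfl⟩; exact (ih j).2.1)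
    have hhi : sSup (Set.range w) ≤ sSup (Set.range v) :=
      csSup_le (Set.range_nonempty w) (by rintro x ⟨j, rfl⟩; exact (ih j).2.2)
    rw [h1]
    exact ⟨hmem, hlo.trans hmean.1, hmean.2.trans hhi⟩

/-- If `𝐌` is a mean-type mapping and `φ` is a `p`-limit-like
function, then `𝓜_φ := φ ∘ O*_𝐌` is a mean on `I` which is `𝐌`-invariant. -/
theorem limitLike_comp_orbit_isMean_and_invariant
    {I : Set ℝ} (hne : I.Nonempty) (hI : I.OrdConnected)
    {p : ℕ} (hp : 2 ≤ p)
    (T : (Fin p → ℝ) → Fin p → ℝ) (hT : IsMeanType I p T)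
    (φ : (ℕ → ℝ) → ℝ) (hφ : IsLimitLike I p φ) :
    IsMean I p (fun v => φ (orbitSeq p (by omega) T v)) ∧
      ∀ v : Fin p → ℝ, (∀ i, v i ∈ I) →
        φ (orbitSeq p (by omega) T (T v)) = φ (orbitSeq p (by omega) T v) := by
  have hpos : 0 < p := by omega
  haveI : Nonempty (Fin p) := ⟨⟨0, hpos⟩⟩
  -- basic facts about the orbit sequence
  have key : ∀ (v : Fin p → ℝ), (∀ i, v i ∈ I) →
      (∀ k, orbitSeq p hpos T v k ∈ I) ∧
      (∀ k, sInf (Set.range v) ≤ orbitSeq p hpos T v k) ∧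
      (∀ k, orbitSeq p hpos T v k ≤ sSup (Set.range v)) := by
    intro v hv
    refine ⟨fun k => ?_, fun k => ?_, fun k => ?_⟩
    · exact (iter_bounds hp T hT v hv (k / p) _).1
    · exact (iter_bounds hp T hT v hv (k / p) _).2.1
    · exact (iter_bounds hp T hT v hv (k / p) _).2.2
  have hbdd : ∀ (v : Fin p → ℝ), (∀ i, v i ∈ I) →
      BddBelow (Set.range (orbitSeq p hpos T v)) ∧
      BddAbove (Set.range (orbitSeq p hpos T v)) := by
    intro v hv
    obtain ⟨_, hlo, hhi⟩ := key v hv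
    exact ⟨⟨sInf (Set.range v), by rintro x ⟨k, rfl⟩; exact hlo k⟩,
      ⟨sSup (Set.range v), by rintro x ⟨k, rfl⟩; exact hhi k⟩⟩
  constructor
  · intro v hv
    obtain ⟨hmem, hlo, hhi⟩ := key v hv
    obtain ⟨hbb, hba⟩ := hbdd v hv
    obtain ⟨_, h1, h2⟩ := hφ (orbitSeq p hpos T v) hmem hbb hba
    have hbdd_le : IsBoundedUnder (· ≤ ·) atTop (orbitSeq p hpos T v) :=
      Filter.isBoundedUnder_of ⟨sSup (Set.range v), hhi⟩
    have hbdd_ge : IsBoundedUnder (· ≥ ·) atTop (orbitSeq p hpos T v) :=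
      Filter.isBoundedUnder_of ⟨sInf (Set.range v), hlo⟩
    constructor
    · refine le_trans ?_ h1
      exact le_liminf_of_le hbdd_le.isCoboundedUnder_ge (Filter.Eventually.of_forall hlo)
    · refine h2.trans ?_
      exact limsup_le_of_le hbdd_ge.isCoboundedUnder_le (Filter.Eventually.of_forall hhi)
  · intro v hv
    obtain ⟨hmem, _, _⟩ := key v hv
    obtain ⟨hbb, hba⟩ := hbdd v hv
    have hshift : (fun n => orbitSeq p hpos T v (n + p)) = orbitSeq p hpos T (T v) := by
      funext n
      simp only [orbitSeq]
      have h1 : (n + p) / p = n / p + 1 := Nat.add_div_right n hpos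
      have h2 : (n + p) % p = n % p := Nat.add_mod_right n p
      have h3 : T^[n / p + 1] v = T^[n / p] (T v) := Function.iterate_succ_apply T _ v
      rw [h1, h3]
      exact congrArg _ (Fin.ext h2)
    obtain ⟨h0, _, _⟩ := hφ (orbitSeq p hpos T v) hmem hbb hba
    rw [← hshift] at *
    exact h0.symm
end

section
/- Every mean-type mapping 𝐌 : I^p → I^p admits at least one 𝐌-invariant mean on I. -/
open Filter Set Topology

/-! The invariant mean is `K v = lim max 𝐌ⁿ(v)`. Since every coordinate of `𝐌` is a mean, the
maximum of `𝐌ⁿ(v)` decreases and the minimum increases along the orbit, so the limit exists and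
lies between `min v` and `max v`; shifting the orbit by one step does not change the limit. -/

noncomputable def maxLimit {p : ℕ} (T : (Fin p → ℝ) → Fin p → ℝ) (v : Fin p → ℝ) : ℝ :=
  ⨅ n : ℕ, sSup (range (T^[n] v))

namespace IsMeanType

variable {I : Set ℝ} {p : ℕ} {T : (Fin p → ℝ) → Fin p → ℝ} {v : Fin p → ℝ}

theorem iterate_mem (hT : IsMeanType I p T) (hv : ∀ i, v i ∈ I) (n : ℕ) (i : Fin p) :
    T^[n] v i ∈ I := by
  induction n generalizing i with
  | zero => exact hv i
  | succ n ih =>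
    rw [Function.iterate_succ_apply']
    exact hT.2 _ ih i

variable [NeZero p]

theorem sSup_range_apply_le (hT : IsMeanType I p T) (hv : ∀ i, v i ∈ I) :
    sSup (range (T v)) ≤ sSup (range v) :=
  csSup_le (range_nonempty _) <| forall_mem_range.2 fun i => (hT.1 i v hv).2

theorem sInf_range_le_apply (hT : IsMeanType I p T) (hv : ∀ i, v i ∈ I) :
    sInf (range v) ≤ sInf (range (T v)) :=
  le_csInf (range_nonempty _) <| forall_mem_range.2 fun i => (hT.1 i v hv).1

theorem antitone_sSup_range_iterate (hT : IsMeanType I p T) (hv : ∀ i, v i ∈ I) :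
    Antitone fun n => sSup (range (T^[n] v)) :=
  antitone_nat_of_succ_le fun n => by
    rw [Function.iterate_succ_apply']
    exact hT.sSup_range_apply_le (hT.iterate_mem hv n)

theorem monotone_sInf_range_iterate (hT : IsMeanType I p T) (hv : ∀ i, v i ∈ I) :
    Monotone fun n => sInf (range (T^[n] v)) :=
  monotone_nat_of_le_succ fun n => by
    rw [Function.iterate_succ_apply']
    exact hT.sInf_range_le_apply (hT.iterate_mem hv n)

theorem sInf_range_le_sSup_range_iterate (hT : IsMeanType I p T) (hv : ∀ i, v i ∈ I) (n : ℕ) :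
    sInf (range v) ≤ sSup (range (T^[n] v)) :=
  (hT.monotone_sInf_range_iterate hv (Nat.zero_le n)).trans <|
    csInf_le_csSup (range_nonempty _) (finite_range _).bddBelow (finite_range _).bddAbove

theorem isMean_maxLimit (hT : IsMeanType I p T) : IsMean I p (maxLimit T) := fun v hv =>
  ⟨le_ciInf (hT.sInf_range_le_sSup_range_iterate hv),
    ciInf_le ⟨sInf (range v), forall_mem_range.2 (hT.sInf_range_le_sSup_range_iterate hv)⟩ 0⟩

theorem maxLimit_apply (hT : IsMeanType I p T) (hv : ∀ i, v i ∈ I) :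
    maxLimit T (T v) = maxLimit T v := by
  simp only [maxLimit, ← Function.iterate_succ_apply]
  exact (hT.antitone_sSup_range_iterate hv).ciInf_comp_tendsto_atTop_of_linearOrder
    (tendsto_add_atTop_nat 1)

end IsMeanType

theorem exists_invariant_mean_general
    {I : Set ℝ} {p : ℕ} (hp : 2 ≤ p)
    (T : (Fin p → ℝ) → Fin p → ℝ) (hT : IsMeanType I p T) :
    ∃ K : (Fin p → ℝ) → ℝ, IsMean I p K ∧
      ∀ v : Fin p → ℝ, (∀ i, v i ∈ I) → K (T v) = K v :=
  have : NeZero p := ⟨by omega⟩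
  ⟨maxLimit T, hT.isMean_maxLimit, fun _ hv => hT.maxLimit_apply hv⟩

/-- Every mean-type mapping admits at least one invariant mean. -/
theorem exists_invariant_mean
    {I : Set ℝ} (hne : I.Nonempty) (hI : I.OrdConnected)
    {p : ℕ} (hp : 2 ≤ p)
    (T : (Fin p → ℝ) → Fin p → ℝ) (hT : IsMeanType I p T) :
    ∃ K : (Fin p → ℝ) → ℝ, IsMean I p K ∧
      ∀ v : Fin p → ℝ, (∀ i, v i ∈ I) → K (T v) = K v :=
  exists_invariant_mean_general hp T hT
end

section
/- (Invariance Principle) Let 𝐌 : I^p → I^p be a mean-type mapping and K : I^p → ℝ an arbitrary mean on I. Then K is the unique 𝐌-invariant mean if and only if the sequence of iterates (𝐌ⁿ)_{n∈ℕ} converges pointwise on I^p to the mapping 𝐊 := (K,…,K). -/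
open Filter Set Topology

/-!
Along an orbit `𝐌ⁿ(v)` the largest coordinate never increases and the smallest never
decreases, since each `Mᵢ` is a mean. Their limits `K⁺(v) = infₙ max 𝐌ⁿ(v)` and `K⁻(v) = supₙ min 𝐌ⁿ(v)` are
therefore `𝐌`-invariant means. If `K` is the only invariant mean, then `K⁻ = K = K⁺`, and the
coordinates of `𝐌ⁿ(v)`, squeezed between the two, converge to `K(v)`. Conversely, if
`𝐌ⁿ(v) → (K(v), …, K(v))`, then `K` is invariant by uniqueness of limits, and any invariant
mean `K'` satisfies `min 𝐌ⁿ(v) ≤ K'(v) = K'(𝐌ⁿ(v)) ≤ max 𝐌ⁿ(v)`, whence `K'(v) = K(v)`.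
-/

theorem tendsto_ciSup_of_tendsto_const {α ι L : Type*} [Fintype ι] [Nonempty ι]
    [ConditionallyCompleteLattice L] [TopologicalSpace L] [ContinuousSup L]
    {l : Filter α} {f : α → ι → L} {c : L} (h : ∀ i, Tendsto (f · i) l (𝓝 c)) :
    Tendsto (fun a => ⨆ i, f a i) l (𝓝 c) := by
  simpa only [← Finset.sup'_univ_eq_ciSup, Finset.sup'_const] using
    Tendsto.finset_sup'_nhds_apply Finset.univ_nonempty fun i _ => h i

theorem tendsto_ciInf_of_tendsto_const {α ι L : Type*} [Fintype ι] [Nonempty ι]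
    [ConditionallyCompleteLattice L] [TopologicalSpace L] [ContinuousInf L]
    {l : Filter α} {f : α → ι → L} {c : L} (h : ∀ i, Tendsto (f · i) l (𝓝 c)) :
    Tendsto (fun a => ⨅ i, f a i) l (𝓝 c) := by
  simpa only [← Finset.inf'_univ_eq_ciInf, Finset.inf'_const] using
    Tendsto.finset_inf'_nhds_apply Finset.univ_nonempty fun i _ => h i

theorem Set.MapsTo.apply_iterate_eq {α β : Type*} {f : α → α} {g : α → β} {s : Set α}
    (hf : MapsTo f s s) (hg : ∀ x ∈ s, g (f x) = g x) {x : α} (hx : x ∈ s) (n : ℕ) :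
    g (f^[n] x) = g x := by
  induction n with
  | zero => rfl
  | succ n ih => rw [Function.iterate_succ_apply', hg _ (hf.iterate n hx), ih]

variable {I : Set ℝ} {p : ℕ} {T : (Fin p → ℝ) → Fin p → ℝ} {v : Fin p → ℝ}

theorem IsMean.iInf_le {M : (Fin p → ℝ) → ℝ} (hM : IsMean I p M) (hv : ∀ i, v i ∈ I) :
    ⨅ i, v i ≤ M v :=
  (hM v hv).1

theorem IsMean.le_iSup {M : (Fin p → ℝ) → ℝ} (hM : IsMean I p M) (hv : ∀ i, v i ∈ I) :
    M v ≤ ⨆ i, v i :=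
  (hM v hv).2

theorem IsMeanType.mapsTo (hT : IsMeanType I p T) :
    MapsTo T {v | ∀ i, v i ∈ I} {v | ∀ i, v i ∈ I} :=
  hT.2

noncomputable def orbitSup (T : (Fin p → ℝ) → Fin p → ℝ) (v : Fin p → ℝ) (n : ℕ) : ℝ :=
  ⨆ j, T^[n] v j

noncomputable def orbitInf (T : (Fin p → ℝ) → Fin p → ℝ) (v : Fin p → ℝ) (n : ℕ) : ℝ :=
  ⨅ j, T^[n] v j

noncomputable def upperLimitMean (T : (Fin p → ℝ) → Fin p → ℝ) (v : Fin p → ℝ) : ℝ :=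
  ⨅ n, orbitSup T v n

noncomputable def lowerLimitMean (T : (Fin p → ℝ) → Fin p → ℝ) (v : Fin p → ℝ) : ℝ :=
  ⨆ n, orbitInf T v n

theorem orbitInf_le_apply (n : ℕ) (i : Fin p) : orbitInf T v n ≤ T^[n] v i :=
  ciInf_le (Finite.bddBelow_range _) i

theorem apply_le_orbitSup (n : ℕ) (i : Fin p) : T^[n] v i ≤ orbitSup T v n :=
  le_ciSup (Finite.bddAbove_range _) i

theorem orbitInf_le_orbitSup [NeZero p] (n : ℕ) : orbitInf T v n ≤ orbitSup T v n :=
  (orbitInf_le_apply n 0).trans (apply_le_orbitSup n 0)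

theorem orbitSup_apply_map (n : ℕ) : orbitSup T (T v) n = orbitSup T v (n + 1) := by
  simp only [orbitSup, Function.iterate_succ_apply]

theorem orbitInf_apply_map (n : ℕ) : orbitInf T (T v) n = orbitInf T v (n + 1) := by
  simp only [orbitInf, Function.iterate_succ_apply]

theorem antitone_orbitSup [NeZero p] (hT : IsMeanType I p T) (hv : ∀ i, v i ∈ I) :
    Antitone (orbitSup T v) := by
  refine antitone_nat_of_succ_le fun n => ciSup_le fun j => ?_
  rw [Function.iterate_succ_apply']
  exact (hT.1 j).le_iSup (hT.mapsTo.iterate n hv)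

theorem monotone_orbitInf [NeZero p] (hT : IsMeanType I p T) (hv : ∀ i, v i ∈ I) :
    Monotone (orbitInf T v) := by
  refine monotone_nat_of_le_succ fun n => le_ciInf fun j => ?_
  rw [Function.iterate_succ_apply']
  exact (hT.1 j).iInf_le (hT.mapsTo.iterate n hv)

theorem tendsto_orbitSup [NeZero p] (hT : IsMeanType I p T) (hv : ∀ i, v i ∈ I) :
    Tendsto (orbitSup T v) atTop (𝓝 (upperLimitMean T v)) :=
  tendsto_atTop_ciInf (antitone_orbitSup hT hv) ⟨orbitInf T v 0, by
    rintro _ ⟨n, rfl⟩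
    exact (monotone_orbitInf hT hv n.zero_le).trans (orbitInf_le_orbitSup n)⟩

theorem tendsto_orbitInf [NeZero p] (hT : IsMeanType I p T) (hv : ∀ i, v i ∈ I) :
    Tendsto (orbitInf T v) atTop (𝓝 (lowerLimitMean T v)) :=
  tendsto_atTop_ciSup (monotone_orbitInf hT hv) ⟨orbitSup T v 0, by
    rintro _ ⟨n, rfl⟩
    exact (orbitInf_le_orbitSup n).trans (antitone_orbitSup hT hv n.zero_le)⟩

theorem upperLimitMean_apply_map [NeZero p] (hT : IsMeanType I p T) (hv : ∀ i, v i ∈ I) :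
    upperLimitMean T (T v) = upperLimitMean T v := by
  refine tendsto_nhds_unique (tendsto_orbitSup hT (hT.mapsTo hv)) ?_
  rw [show orbitSup T (T v) = orbitSup T v ∘ (· + 1) from funext orbitSup_apply_map]
  exact (tendsto_orbitSup hT hv).comp (tendsto_add_atTop_nat 1)

theorem lowerLimitMean_apply_map [NeZero p] (hT : IsMeanType I p T) (hv : ∀ i, v i ∈ I) :
    lowerLimitMean T (T v) = lowerLimitMean T v := by
  refine tendsto_nhds_unique (tendsto_orbitInf hT (hT.mapsTo hv)) ?_
  rw [show orbitInf T (T v) = orbitInf T v ∘ (· + 1) from funext orbitInf_apply_map]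
  exact (tendsto_orbitInf hT hv).comp (tendsto_add_atTop_nat 1)

theorem isMean_upperLimitMean [NeZero p] (hT : IsMeanType I p T) :
    IsMean I p (upperLimitMean T) := fun _ hw =>
  ⟨ge_of_tendsto' (tendsto_orbitSup hT hw) fun n =>
      (monotone_orbitInf hT hw n.zero_le).trans (orbitInf_le_orbitSup n),
    (antitone_orbitSup hT hw).le_of_tendsto (tendsto_orbitSup hT hw) 0⟩

theorem isMean_lowerLimitMean [NeZero p] (hT : IsMeanType I p T) :
    IsMean I p (lowerLimitMean T) := fun _ hw =>
  ⟨(monotone_orbitInf hT hw).ge_of_tendsto (tendsto_orbitInf hT hw) 0,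
    le_of_tendsto' (tendsto_orbitInf hT hw) fun n =>
      (orbitInf_le_orbitSup n).trans (antitone_orbitSup hT hw n.zero_le)⟩

theorem IsMean.eq_of_tendsto_iterate [NeZero p] {M : (Fin p → ℝ) → ℝ} (hM : IsMean I p M)
    (hT : IsMeanType I p T) (hMT : ∀ v : Fin p → ℝ, (∀ i, v i ∈ I) → M (T v) = M v)
    (hv : ∀ i, v i ∈ I) {c : ℝ} (hc : ∀ i, Tendsto (fun n => T^[n] v i) atTop (𝓝 c)) :
    M v = c := by
  have hconst n : M v = M (T^[n] v) := (hT.mapsTo.apply_iterate_eq hMT hv n).symm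
  refine tendsto_const_nhds_iff.1 <| tendsto_of_tendsto_of_tendsto_of_le_of_le
    (tendsto_ciInf_of_tendsto_const hc) (tendsto_ciSup_of_tendsto_const hc) (fun n => ?_)
    fun n => ?_
  · exact (hconst n).symm ▸ hM.iInf_le (hT.mapsTo.iterate n hv)
  · exact (hconst n).symm ▸ hM.le_iSup (hT.mapsTo.iterate n hv)

theorem invariance_principle_general
    {I : Set ℝ}
    {p : ℕ} (hp : 2 ≤ p)
    (T : (Fin p → ℝ) → Fin p → ℝ) (hT : IsMeanType I p T)
    (K : (Fin p → ℝ) → ℝ) :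
    ((∀ v : Fin p → ℝ, (∀ i, v i ∈ I) → K (T v) = K v) ∧
      ∀ K' : (Fin p → ℝ) → ℝ, IsMean I p K' →
        (∀ v : Fin p → ℝ, (∀ i, v i ∈ I) → K' (T v) = K' v) →
        ∀ v : Fin p → ℝ, (∀ i, v i ∈ I) → K' v = K v) ↔
    ∀ v : Fin p → ℝ, (∀ i, v i ∈ I) →
      ∀ i, Filter.Tendsto (fun n => T^[n] v i) Filter.atTop (nhds (K v)) := by
  have : NeZero p := ⟨by omega⟩
  constructor
  · rintro ⟨-, hunique⟩ v hv i
    have hupper := hunique _ (isMean_upperLimitMean hT)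
      (fun _ hw => upperLimitMean_apply_map hT hw) v hv
    have hlower := hunique _ (isMean_lowerLimitMean hT)
      (fun _ hw => lowerLimitMean_apply_map hT hw) v hv
    exact tendsto_of_tendsto_of_tendsto_of_le_of_le (hlower ▸ tendsto_orbitInf hT hv)
      (hupper ▸ tendsto_orbitSup hT hv) (orbitInf_le_apply · i) (apply_le_orbitSup · i)
  · intro hlim
    refine ⟨fun v hv => tendsto_nhds_unique (hlim (T v) (hT.mapsTo hv) 0) ?_,
      fun K' hK' hK'T v hv => hK'.eq_of_tendsto_iterate hT hK'T hv (hlim v hv)⟩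
    simpa only [Function.comp_def, ← Function.iterate_succ_apply] using
      (hlim v hv 0).comp (tendsto_add_atTop_nat 1)

/-- **Invariance Principle.** A mean `K` is the unique `𝐌`-invariant
mean if and only if the iterates `𝐌ⁿ` converge pointwise on `I^p` to `(K,…,K)`. -/
theorem invariance_principle
    {I : Set ℝ} (hne : I.Nonempty) (hI : I.OrdConnected)
    {p : ℕ} (hp : 2 ≤ p)
    (T : (Fin p → ℝ) → Fin p → ℝ) (hT : IsMeanType I p T)
    (K : (Fin p → ℝ) → ℝ) (hK : IsMean I p K) :
    ((∀ v : Fin p → ℝ, (∀ i, v i ∈ I) → K (T v) = K v) ∧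
      ∀ K' : (Fin p → ℝ) → ℝ, IsMean I p K' →
        (∀ v : Fin p → ℝ, (∀ i, v i ∈ I) → K' (T v) = K' v) →
        ∀ v : Fin p → ℝ, (∀ i, v i ∈ I) → K' v = K v) ↔
    ∀ v : Fin p → ℝ, (∀ i, v i ∈ I) →
      ∀ i, Filter.Tendsto (fun n => T^[n] v i) Filter.atTop (nhds (K v)) :=
  invariance_principle_general hp T hT K
end

section
/- Under the stated hypotheses, the means M and N satisfy |M(u,v) − N(u,v)| ≤ κ·|u − v| for all u, v ∈ ℝ. -/
/-- Under the stated hypotheses, `|M(u,v) − N(u,v)| ≤ κ·|u − v|`. -/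
theorem abs_M_sub_N_le
    (α : ℝ → ℝ) (hadd : ∀ x y, α (x + y) = α x + α y) (hdisc : ¬ Continuous α)
    (κ b c d : ℝ) (hκ0 : 0 < κ) (hκ1 : κ < 1)
    (hc : 1 < c) (hb : 0 < b) (hbd : b ≤ d)
    (hc1 : 2 / (1 + κ) ≤ c) (hc2 : c ≤ 2 / (1 - κ))
    (hd1 : 2 * b / (1 + κ) ≤ d) (hd2 : d ≤ 2 * b / (1 - κ))
    (lam : ℝ → ℝ) (hlam : ∀ u : ℝ, lam u = (|α u| + b) / (c * |α u| + d))
    (M N : ℝ → ℝ → ℝ)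
    (hM : ∀ u v : ℝ, M u v = lam u * u + (1 - lam u) * v)
    (hN : ∀ u v : ℝ, N u v = (1 - lam u) * u + lam u * v)
    :
    ∀ u v : ℝ, |M u v - N u v| ≤ κ * |u - v| := by
  intro u v
  set t := |α u| with htdef
  have ht : 0 ≤ t := abs_nonneg _
  have hd : 0 < d := lt_of_lt_of_le hb hbd
  have hden : 0 < c * t + d := by nlinarith
  have hκ1' : 0 < 1 + κ := by linarith
  have hκ2' : 0 < 1 - κ := by linarith
  have hC1 : 2 ≤ c * (1 + κ) := by
    rw [div_le_iff₀ hκ1'] at hc1; linarith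
  have hC2 : c * (1 - κ) ≤ 2 := by
    rw [le_div_iff₀ hκ2'] at hc2; linarith
  have hD1 : 2 * b ≤ d * (1 + κ) := by
    rw [div_le_iff₀ hκ1'] at hd1; linarith
  have hD2 : d * (1 - κ) ≤ 2 * b := by
    rw [le_div_iff₀ hκ2'] at hd2; linarith
  have hlv : lam u * (c * t + d) = t + b := by
    rw [hlam u, ← htdef, div_mul_cancel₀ _ (ne_of_gt hden)]
  have key : |2 * lam u - 1| ≤ κ := by
    rw [abs_le]
    constructor <;> nlinarith [mul_pos hden hκ0]
  have hMN : M u v - N u v = (2 * lam u - 1) * (u - v) := by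
    rw [hM, hN]; ring
  rw [hMN, abs_mul]
  exact mul_le_mul_of_nonneg_right key (abs_nonneg _)
end

section
/- Under the stated hypotheses, writing (M_n, N_n) := (M,N)ⁿ for the n-th iterate of the mapping (M,N) : ℝ² → ℝ², one has |M_n(u,v) − N_n(u,v)| ≤ κⁿ·|u − v| for all u, v ∈ ℝ and all n ∈ ℕ. -/
/-- Under the stated hypotheses, the iterates
`(M_n, N_n) := (M,N)ⁿ` satisfy `|M_n(u,v) − N_n(u,v)| ≤ κⁿ·|u − v|`. -/
theorem abs_iterates_sub_le_pow
    (α : ℝ → ℝ) (hadd : ∀ x y, α (x + y) = α x + α y) (hdisc : ¬ Continuous α)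
    (κ b c d : ℝ) (hκ0 : 0 < κ) (hκ1 : κ < 1)
    (hc : 1 < c) (hb : 0 < b) (hbd : b ≤ d)
    (hc1 : 2 / (1 + κ) ≤ c) (hc2 : c ≤ 2 / (1 - κ))
    (hd1 : 2 * b / (1 + κ) ≤ d) (hd2 : d ≤ 2 * b / (1 - κ))
    (lam : ℝ → ℝ) (hlam : ∀ u : ℝ, lam u = (|α u| + b) / (c * |α u| + d))
    (M N : ℝ → ℝ → ℝ)
    (hM : ∀ u v : ℝ, M u v = lam u * u + (1 - lam u) * v)
    (hN : ∀ u v : ℝ, N u v = (1 - lam u) * u + lam u * v)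
    :
    ∀ (u v : ℝ) (n : ℕ),
      |((fun q : ℝ × ℝ => (M q.1 q.2, N q.1 q.2))^[n] (u, v)).1 -
        ((fun q : ℝ × ℝ => (M q.1 q.2, N q.1 q.2))^[n] (u, v)).2| ≤
      κ ^ n * |u - v| := by
  have hκ1' : (0:ℝ) < 1 + κ := by linarith
  have hκ2' : (0:ℝ) < 1 - κ := by linarith
  have hc1' : 2 ≤ c * (1 + κ) := by
    rw [div_le_iff₀ hκ1'] at hc1; linarith
  have hc2' : c * (1 - κ) ≤ 2 := by
    rw [le_div_iff₀ hκ2'] at hc2; linarith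
  have hd1' : 2 * b ≤ d * (1 + κ) := by
    rw [div_le_iff₀ hκ1'] at hd1; linarith
  have hd2' : d * (1 - κ) ≤ 2 * b := by
    rw [le_div_iff₀ hκ2'] at hd2; linarith
  -- key one-step estimate
  have key : ∀ u v : ℝ, |M u v - N u v| ≤ κ * |u - v| := by
    intro u v
    set t := |α u| with ht
    have ht0 : 0 ≤ t := abs_nonneg _
    have hden : 0 < c * t + d := by nlinarith
    have hlamab : |2 * lam u - 1| ≤ κ := by
      rw [hlam u, abs_le]
      have h2 : 2 * ((t + b) / (c * t + d)) = (2 * (t + b)) / (c * t + d) := by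
        ring
      constructor
      · rw [le_sub_iff_add_le, h2, le_div_iff₀ hden]
        nlinarith
      · rw [sub_le_iff_le_add, h2, div_le_iff₀ hden]
        nlinarith
    have hMN : M u v - N u v = (2 * lam u - 1) * (u - v) := by
      rw [hM, hN]; ring
    rw [hMN, abs_mul]
    exact mul_le_mul_of_nonneg_right hlamab (abs_nonneg _)
  intro u v n
  induction n generalizing u v with
  | zero => simp
  | succ n ih =>
    rw [Function.iterate_succ_apply]
    calc |((fun q : ℝ × ℝ => (M q.1 q.2, N q.1 q.2))^[n] (M u v, N u v)).1 -
          ((fun q : ℝ × ℝ => (M q.1 q.2, N q.1 q.2))^[n] (M u v, N u v)).2|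
        ≤ κ ^ n * |M u v - N u v| := ih (M u v) (N u v)
      _ ≤ κ ^ n * (κ * |u - v|) :=
          mul_le_mul_of_nonneg_left (key u v) (pow_nonneg hκ0.le n)
      _ = κ ^ (n + 1) * |u - v| := by ring
end

section
/- Under the stated hypotheses, the arithmetic mean A : ℝ² → ℝ, A(u,v) = (u+v)/2, is the unique (M,N)-invariant mean on ℝ, and the iterates (M,N)ⁿ converge pointwise on ℝ² to the mapping (A,A). -/
lemma mean_abs_bound {x y k : ℝ} (h1 : min x y ≤ k) (h2 : k ≤ max x y) :
    |k - (x + y) / 2| ≤ |x - y| / 2 := by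
  rcases le_total x y with h | h
  · rw [min_eq_left h] at h1
    rw [max_eq_right h] at h2
    rw [abs_of_nonpos (show x - y ≤ 0 by linarith), abs_le]
    constructor <;> linarith
  · rw [min_eq_right h] at h1
    rw [max_eq_left h] at h2
    rw [abs_of_nonneg (show (0:ℝ) ≤ x - y by linarith), abs_le]
    constructor <;> linarith

/-- Under the stated hypotheses, the arithmetic mean
`A(u,v) = (u+v)/2` is the unique `(M,N)`-invariant mean on `ℝ`, and the iterates
`(M,N)ⁿ` converge pointwise on `ℝ²` to `(A, A)`. -/
theorem arithmetic_mean_unique_invariant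
    (α : ℝ → ℝ) (hadd : ∀ x y, α (x + y) = α x + α y) (hdisc : ¬ Continuous α)
    (κ b c d : ℝ) (hκ0 : 0 < κ) (hκ1 : κ < 1)
    (hc : 1 < c) (hb : 0 < b) (hbd : b ≤ d)
    (hc1 : 2 / (1 + κ) ≤ c) (hc2 : c ≤ 2 / (1 - κ))
    (hd1 : 2 * b / (1 + κ) ≤ d) (hd2 : d ≤ 2 * b / (1 - κ))
    (lam : ℝ → ℝ) (hlam : ∀ u : ℝ, lam u = (|α u| + b) / (c * |α u| + d))
    (M N : ℝ → ℝ → ℝ)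
    (hM : ∀ u v : ℝ, M u v = lam u * u + (1 - lam u) * v)
    (hN : ∀ u v : ℝ, N u v = (1 - lam u) * u + lam u * v)
    :
    ((∀ u v : ℝ, min u v ≤ (u + v) / 2 ∧ (u + v) / 2 ≤ max u v) ∧
      (∀ u v : ℝ, (M u v + N u v) / 2 = (u + v) / 2) ∧
      ∀ K : ℝ → ℝ → ℝ, (∀ u v : ℝ, min u v ≤ K u v ∧ K u v ≤ max u v) →
        (∀ u v : ℝ, K (M u v) (N u v) = K u v) →
        ∀ u v : ℝ, K u v = (u + v) / 2) ∧
    ∀ u v : ℝ, Filter.Tendsto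
      (fun n => (fun q : ℝ × ℝ => (M q.1 q.2, N q.1 q.2))^[n] (u, v))
      Filter.atTop (nhds ((u + v) / 2, (u + v) / 2)) := by
  have hκp : (0:ℝ) < 1 + κ := by linarith
  have hκm : (0:ℝ) < 1 - κ := by linarith
  have h2c : 2 ≤ c * (1 + κ) := by
    have := (div_le_iff₀ hκp).mp hc1; linarith
  have hc2' : c * (1 - κ) ≤ 2 := by
    have := (le_div_iff₀ hκm).mp hc2; linarith
  have h2d : 2 * b ≤ d * (1 + κ) := by
    have := (div_le_iff₀ hκp).mp hd1; linarith
  have hd2' : d * (1 - κ) ≤ 2 * b := by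
    have := (le_div_iff₀ hκm).mp hd2; linarith
  have hd0 : 0 < d := lt_of_lt_of_le hb hbd
  have hc0 : 0 < c := by linarith
  have key : ∀ u : ℝ, |2 * lam u - 1| ≤ κ := by
    intro u
    have ht0 : 0 ≤ |α u| := abs_nonneg _
    have hden : 0 < c * |α u| + d := by positivity
    have heq : 2 * lam u - 1 = (2 * (|α u| + b) - (c * |α u| + d)) / (c * |α u| + d) := by
      rw [hlam u]; field_simp
    rw [heq, abs_le]
    constructor
    · rw [le_div_iff₀ hden]; nlinarith
    · rw [div_le_iff₀ hden]; nlinarith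
  have hMN : ∀ u v : ℝ, M u v + N u v = u + v := by
    intro u v; rw [hM, hN]; ring
  have hdiff : ∀ u v : ℝ, |M u v - N u v| ≤ κ * |u - v| := by
    intro u v
    have h : M u v - N u v = (2 * lam u - 1) * (u - v) := by rw [hM, hN]; ring
    rw [h, abs_mul]
    exact mul_le_mul_of_nonneg_right (key u) (abs_nonneg _)
  set F : ℝ × ℝ → ℝ × ℝ := fun q => (M q.1 q.2, N q.1 q.2) with hF
  have hsum : ∀ (q : ℝ × ℝ) (n : ℕ), (F^[n] q).1 + (F^[n] q).2 = q.1 + q.2 := by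
    intro q n
    induction n with
    | zero => simp
    | succ n ih =>
      rw [Function.iterate_succ_apply']
      calc (F (F^[n] q)).1 + (F (F^[n] q)).2
          = M (F^[n] q).1 (F^[n] q).2 + N (F^[n] q).1 (F^[n] q).2 := rfl
        _ = (F^[n] q).1 + (F^[n] q).2 := hMN _ _
        _ = q.1 + q.2 := ih
  have hdn : ∀ (q : ℝ × ℝ) (n : ℕ),
      |(F^[n] q).1 - (F^[n] q).2| ≤ κ ^ n * |q.1 - q.2| := by
    intro q n
    induction n with
    | zero => simp
    | succ n ih =>
      rw [Function.iterate_succ_apply']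
      calc |(F (F^[n] q)).1 - (F (F^[n] q)).2|
          = |M (F^[n] q).1 (F^[n] q).2 - N (F^[n] q).1 (F^[n] q).2| := rfl
        _ ≤ κ * |(F^[n] q).1 - (F^[n] q).2| := hdiff _ _
        _ ≤ κ * (κ ^ n * |q.1 - q.2|) := mul_le_mul_of_nonneg_left ih hκ0.le
        _ = κ ^ (n + 1) * |q.1 - q.2| := by ring
  have hpow : ∀ q : ℝ × ℝ, Filter.Tendsto (fun n => κ ^ n * |q.1 - q.2|)
      Filter.atTop (nhds 0) := by
    intro q
    have := (tendsto_pow_atTop_nhds_zero_of_lt_one hκ0.le hκ1).mul_const |q.1 - q.2|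
    simpa using this
  refine ⟨⟨?_, ?_, ?_⟩, ?_⟩
  · intro u v
    rcases le_total u v with h | h
    · rw [min_eq_left h, max_eq_right h]; constructor <;> linarith
    · rw [min_eq_right h, max_eq_left h]; constructor <;> linarith
  · intro u v; rw [hMN]
  · intro K hKmean hKinv u v
    set q : ℝ × ℝ := (u, v) with hq
    have hKn : ∀ n : ℕ, K (F^[n] q).1 (F^[n] q).2 = K u v := by
      intro n
      induction n with
      | zero => rfl
      | succ n ih =>
        rw [Function.iterate_succ_apply']
        calc K (F (F^[n] q)).1 (F (F^[n] q)).2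
            = K (M (F^[n] q).1 (F^[n] q).2) (N (F^[n] q).1 (F^[n] q).2) := rfl
          _ = K (F^[n] q).1 (F^[n] q).2 := hKinv _ _
          _ = K u v := ih
    have hbound : ∀ n : ℕ, |K u v - (u + v) / 2| ≤ κ ^ n * |u - v| := by
      intro n
      have h3 := mean_abs_bound (hKmean (F^[n] q).1 (F^[n] q).2).1
        (hKmean (F^[n] q).1 (F^[n] q).2).2
      rw [hKn n, hsum q n] at h3
      have h4 := hdn q n
      have hq1 : q.1 = u := rfl
      have hq2 : q.2 = v := rfl
      rw [hq1, hq2] at h3 h4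
      have hnn : (0:ℝ) ≤ κ ^ n * |u - v| := by positivity
      linarith
    have h0 : |K u v - (u + v) / 2| ≤ 0 :=
      ge_of_tendsto' (hpow q) (fun n => by
        have := hbound n
        have hq1 : q.1 = u := rfl
        have hq2 : q.2 = v := rfl
        rw [hq1, hq2]; exact this)
    have h1 := abs_nonneg (K u v - (u + v) / 2)
    have h2 : |K u v - (u + v) / 2| = 0 := le_antisymm h0 h1
    have h5 := abs_eq_zero.mp h2
    linarith [sub_eq_zero.mp h5]
  · intro u v
    set q : ℝ × ℝ := (u, v) with hq
    have hdt : Filter.Tendsto (fun n => (F^[n] q).1 - (F^[n] q).2)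
        Filter.atTop (nhds 0) :=
      squeeze_zero_norm (fun n => by simpa using hdn q n) (hpow q)
    have hst : Filter.Tendsto (fun n => (F^[n] q).1 + (F^[n] q).2)
        Filter.atTop (nhds (u + v)) := by
      have heq : (fun n : ℕ => (F^[n] q).1 + (F^[n] q).2) = fun _ => u + v := by
        funext n; rw [hsum q n]
      rw [heq]; exact tendsto_const_nhds
    have h1 : Filter.Tendsto (fun n => (F^[n] q).1) Filter.atTop
        (nhds ((u + v) / 2)) := by
      have h := (hst.add hdt).div_const 2
      simp only [add_zero] at h
      exact h.congr (fun n => by ring)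
    have h2 : Filter.Tendsto (fun n => (F^[n] q).2) Filter.atTop
        (nhds ((u + v) / 2)) := by
      have h := (hst.sub hdt).div_const 2
      simp only [sub_zero] at h
      exact h.congr (fun n => by ring)
    have h3 := h1.prodMk_nhds h2
    simpa using h3
end
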